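/- arXiv:1805.05641 — 2 statements merged into one kernel-verified Lean document; each statement's English description precedes it below -/
import Mathlib

section
/- Let 1 ≤ k < n, let κ_1 < κ_2 < … < κ_n be real numbers, c_1, …, c_n real constants, and let A be a real k×n matrix of rank k with all k×k minors Δ_I(A) ≥ 0. Set f_i(x) = Σ_{j=1}^n A_{ij} e^{κ_j x + c_j}. Then the Wronskian τ(x) = det( f_i^{(l−1)}(x) )_{i,l=1}^k is strictly positive for every x ∈ ℝ. -/
/-!
The Wronskian matrix factors as `A * Vᵀ` with `V l j = κ_j ^ l * exp (κ_j x + c_j)`, so by the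
Cauchy–Binet formula `τ x = ∑_I Δ_I(A) Δ_I(V)`. Each `Δ_I(V)` is a product of positive weights
times a Vandermonde determinant in increasing phases, hence positive. All `Δ_I(A)` are
nonnegative, and not all vanish since `∑_I Δ_I(A)² = det (A * Aᵀ) ≠ 0` when `A` has rank `k`.
-/

open scoped BigOperators

/-- The `k × k` maximal minor of a real `k × n` matrix `A` on the set of columns `I`
(defined to be `0` when `I` does not have exactly `k` elements). -/
noncomputable def maxMinor {k n : ℕ} (A : Matrix (Fin k) (Fin n) ℝ)
    (I : Finset (Fin n)) : ℝ :=
  if h : I.card = k then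
    (A.submatrix id fun j => ((I.orderIsoOfFin h) j : Fin n)).det
  else 0

open Finset Matrix Equiv Function

theorem Matrix.isUnit_of_rank_eq_card {K m : Type*} [Field K] [Fintype m] [DecidableEq m]
    {M : Matrix m m K} (hM : M.rank = Fintype.card m) : IsUnit M := by
  rw [← mulVec_surjective_iff_isUnit, ← coe_mulVecLin, ← LinearMap.range_eq_top]
  exact Submodule.eq_top_of_finrank_eq (by rwa [Module.finrank_fintype_fun_eq_card])

theorem Matrix.det_mul_transpose_eq_sum {R m n : Type*} [CommRing R] [Fintype m]
    [DecidableEq m] [Fintype n] (A B : Matrix m n R) :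
    (A * Bᵀ).det = ∑ g : m → n, (∏ i, B i (g i)) * (A.submatrix id g).det := by
  calc (A * Bᵀ).det
      = ∑ g : m → n, ∑ σ : Perm m, (Perm.sign σ : R) * ∏ i, A (σ i) (g i) * B i (g i) := by
        simp only [det_apply', mul_apply, transpose_apply, prod_univ_sum, mul_sum,
          Fintype.piFinset_univ]
        exact sum_comm
    _ = _ := by
        refine sum_congr rfl fun g _ => ?_
        simp only [det_apply', submatrix_apply, id, mul_sum, prod_mul_distrib]
        exact sum_congr rfl fun σ _ => by ring

theorem Matrix.det_submatrix_eq_zero_of_not_injective {R m n : Type*} [CommRing R] [Fintype m]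
    [DecidableEq m] (A : Matrix m n R) {g : m → n} (hg : ¬ Injective g) :
    (A.submatrix id g).det = 0 := by
  rw [← det_transpose, transpose_submatrix]
  exact detRowAlternating.map_eq_zero_of_not_injective _ fun h =>
    hg fun a b hab => h (funext fun j => by simp [hab])

theorem Finset.sum_filter_image_eq_sum_perm {α M : Type*} [LinearOrder α] [Fintype α]
    [AddCommMonoid M] {k : ℕ} {I : Finset α} (hI : I.card = k) (F : (Fin k → α) → M) :
    ∑ g : Fin k → α with image g univ = I, F g
      = ∑ σ : Perm (Fin k), F (⇑(I.orderEmbOfFin hI) ∘ ⇑σ) := by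
  set e := I.orderEmbOfFin hI
  refine (sum_bij (fun (σ : Perm (Fin k)) _ => ⇑e ∘ ⇑σ) (fun σ _ => ?_) (fun σ _ τ _ h => ?_)
    (fun g hg => ?_) fun _ _ => rfl).symm
  · rw [mem_filter, image_comp, image_univ_equiv, image_orderEmbOfFin_univ]
    exact ⟨mem_univ _, rfl⟩
  · exact Equiv.ext fun a => e.injective (congrFun h a)
  · have hgI : image g univ = I := (mem_filter.1 hg).2
    have hginj : Injective g := by
      rw [← Set.injOn_univ, ← coe_univ, ← card_image_iff, hgI, hI, card_univ, Fintype.card_fin]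
    have hrange : Set.range g = Set.range e := by
      rw [range_orderEmbOfFin, ← hgI, coe_image, coe_univ, Set.image_univ]
    refine ⟨(Equiv.ofInjective g hginj).trans
      ((Equiv.setCongr hrange).trans (Equiv.ofInjective e e.injective).symm), mem_univ _, ?_⟩
    funext a
    exact apply_ofInjective_symm e.injective _

section maxMinor

variable {k n : ℕ}

theorem maxMinor_of_card_eq (A : Matrix (Fin k) (Fin n) ℝ) {I : Finset (Fin n)}
    (hI : I.card = k) :
    maxMinor A I = (A.submatrix id (I.orderEmbOfFin hI)).det :=
  dif_pos hI

theorem maxMinor_of_card_ne (A : Matrix (Fin k) (Fin n) ℝ) {I : Finset (Fin n)}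
    (hI : I.card ≠ k) :
    maxMinor A I = 0 :=
  dif_neg hI

theorem card_eq_of_maxMinor_ne_zero {A : Matrix (Fin k) (Fin n) ℝ} {I : Finset (Fin n)}
    (hA : maxMinor A I ≠ 0) : I.card = k :=
  not_not.1 fun hI => hA (maxMinor_of_card_ne A hI)

theorem det_mul_transpose_eq_sum_maxMinor (A B : Matrix (Fin k) (Fin n) ℝ) :
    (A * Bᵀ).det = ∑ I, maxMinor A I * maxMinor B I := by
  -- Group the column selections `g` by their image `I`: if `#I = k` they are the increasing
  -- enumeration of `I` composed with a permutation, otherwise `g` is not injective.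
  rw [det_mul_transpose_eq_sum, ← sum_fiberwise univ fun g : Fin k → Fin n => image g univ]
  refine sum_congr rfl fun I _ => ?_
  by_cases hI : I.card = k
  · rw [sum_filter_image_eq_sum_perm hI, maxMinor_of_card_eq A hI, maxMinor_of_card_eq B hI,
      ← det_transpose (B.submatrix _ _), det_apply' (B.submatrix _ _)ᵀ, mul_sum]
    refine sum_congr rfl fun σ _ => ?_
    rw [show A.submatrix id (I.orderEmbOfFin hI ∘ σ)
        = (A.submatrix id (I.orderEmbOfFin hI)).submatrix id σ from rfl, det_permute']
    simp only [transpose_apply, submatrix_apply, id, Function.comp_apply]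
    ring
  · rw [maxMinor_of_card_ne A hI, zero_mul]
    refine sum_eq_zero fun g hg => ?_
    have hg : ¬ Injective g := fun hinj => hI <| by
      rw [← (mem_filter.1 hg).2, card_image_of_injective _ hinj, card_univ, Fintype.card_fin]
    rw [det_submatrix_eq_zero_of_not_injective A hg, mul_zero]

theorem exists_maxMinor_ne_zero_of_rank_eq {A : Matrix (Fin k) (Fin n) ℝ} (hA : A.rank = k) :
    ∃ I, maxMinor A I ≠ 0 := by
  have hdet : (A * Aᵀ).det ≠ 0 :=
    ((isUnit_iff_isUnit_det _).1 (isUnit_of_rank_eq_card (by simpa using hA))).ne_zero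
  rw [det_mul_transpose_eq_sum_maxMinor] at hdet
  obtain ⟨I, -, hI⟩ := exists_ne_zero_of_sum_ne_zero hdet
  exact ⟨I, left_ne_zero_of_mul hI⟩

theorem maxMinor_pow_mul_pos {κ w : Fin n → ℝ} (hκ : StrictMono κ) (hw : ∀ j, 0 < w j)
    {I : Finset (Fin n)} (hI : I.card = k) :
    0 < maxMinor (of fun (l : Fin k) j => κ j ^ (l : ℕ) * w j) I := by
  set e := I.orderEmbOfFin hI
  have hV : (of fun (l : Fin k) j => κ j ^ (l : ℕ) * w j).submatrix id e
      = of fun l a => w (e a) * (vandermonde (κ ∘ e))ᵀ l a := by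
    ext l a
    simp [vandermonde, mul_comm]
  rw [maxMinor_of_card_eq _ hI, hV, det_mul_row, det_transpose, det_vandermonde]
  refine mul_pos (prod_pos fun a _ => hw _) (prod_pos fun a _ => prod_pos fun b hab => ?_)
  exact sub_pos.2 (hκ (e.strictMono (mem_Ioi.1 hab)))

end maxMinor

theorem iteratedDeriv_sum_mul_exp {ι : Type*} [Fintype ι] (C κ c : ι → ℝ) (l : ℕ) :
    iteratedDeriv l (fun y => ∑ j, C j * Real.exp (κ j * y + c j))
      = fun y => ∑ j, C j * κ j ^ l * Real.exp (κ j * y + c j) := by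
  induction l with
  | zero => simp
  | succ l ih =>
    rw [iteratedDeriv_succ, ih]
    funext y
    refine HasDerivAt.deriv (HasDerivAt.fun_sum fun j _ => ?_)
    exact ((((hasDerivAt_id' y).const_mul (κ j)).add_const (c j)).exp.const_mul
      (C j * κ j ^ l)).congr_deriv (by ring)

theorem wronskian_sum_mul_exp_eq_mul_transpose {m ι : Type*} [Fintype ι] (k : ℕ)
    (A : Matrix m ι ℝ) (κ c : ι → ℝ) (x : ℝ) :
    (of fun i (l : Fin k) =>
        iteratedDeriv l (fun y => ∑ j, A i j * Real.exp (κ j * y + c j)) x)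
      = A * (of fun (l : Fin k) j => κ j ^ (l : ℕ) * Real.exp (κ j * x + c j))ᵀ := by
  ext i l
  simp only [of_apply, iteratedDeriv_sum_mul_exp, mul_apply, transpose_apply, mul_assoc]

theorem tau_pos_of_TNN_general
    (k n : ℕ)
    (κ c : Fin n → ℝ) (hκ : StrictMono κ)
    (A : Matrix (Fin k) (Fin n) ℝ) (hrank : A.rank = k)
    (hTNN : ∀ I : Finset (Fin n), I.card = k → 0 ≤ maxMinor A I)
    (f : Fin k → ℝ → ℝ)
    (hf : ∀ i x, f i x = ∑ j, A i j * Real.exp (κ j * x + c j))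
    (τ : ℝ → ℝ)
    (hτ : ∀ x, τ x =
      Matrix.det (Matrix.of fun i l : Fin k => iteratedDeriv (l : ℕ) (f i) x))
    (x : ℝ) :
    0 < τ x := by
  obtain rfl : f = fun i y => ∑ j, A i j * Real.exp (κ j * y + c j) := funext₂ hf
  set V : Matrix (Fin k) (Fin n) ℝ := of fun l j => κ j ^ (l : ℕ) * Real.exp (κ j * x + c j)
  have hV : ∀ I : Finset (Fin n), I.card = k → 0 < maxMinor V I :=
    fun I hI => maxMinor_pow_mul_pos hκ (fun j => Real.exp_pos _) hI
  obtain ⟨I₀, hI₀⟩ := exists_maxMinor_ne_zero_of_rank_eq hrank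
  have hI₀k := card_eq_of_maxMinor_ne_zero hI₀
  rw [hτ, wronskian_sum_mul_exp_eq_mul_transpose, det_mul_transpose_eq_sum_maxMinor]
  refine sum_pos' (fun I _ => ?_)
    ⟨I₀, mem_univ _, mul_pos ((hTNN I₀ hI₀k).lt_of_ne' hI₀) (hV I₀ hI₀k)⟩
  by_cases hI : I.card = k
  · exact mul_nonneg (hTNN I hI) (hV I hI).le
  · rw [maxMinor_of_card_ne A hI, zero_mul]

/-- for totally nonnegative soliton data of full rank `k` with ordered
phases, the Wronskian `τ(x)` of the heat-hierarchy solutions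
`f_i(x) = Σ_j A_{ij} e^{κ_j x + c_j}` is strictly positive for every real `x`. -/
theorem tau_pos_of_TNN
    (k n : ℕ) (hk : 1 ≤ k) (hkn : k < n)
    (κ c : Fin n → ℝ) (hκ : StrictMono κ)
    (A : Matrix (Fin k) (Fin n) ℝ) (hrank : A.rank = k)
    (hTNN : ∀ I : Finset (Fin n), I.card = k → 0 ≤ maxMinor A I)
    (f : Fin k → ℝ → ℝ)
    (hf : ∀ i x, f i x = ∑ j, A i j * Real.exp (κ j * x + c j))
    (τ : ℝ → ℝ)
    (hτ : ∀ x, τ x =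
      Matrix.det (Matrix.of fun i l : Fin k => iteratedDeriv (l : ℕ) (f i) x))
    (x : ℝ) :
    0 < τ x :=
  tau_pos_of_TNN_general k n κ c hκ A hrank hTNN f hf τ hτ x
end

section
/- Let 1 ≤ k < n, let κ_1 < κ_2 < … < κ_n be real numbers, and let A be a totally nonnegative real k×n matrix of rank k. Define θ_j(x, y, t) = κ_j x + κ_j² y + κ_j³ t, f_i(x, y, t) = Σ_{j=1}^n A_{ij} e^{θ_j(x,y,t)}, and τ(x, y, t) = det( ∂_x^{l−1} f_i(x, y, t) )_{i,l=1}^k. Then τ(x, y, t) > 0 for all (x, y, t) ∈ ℝ³, and consequently the multiline soliton u(x, y, t) = 2 ∂_x² log τ(x, y, t) is well-defined and real-analytic on all of ℝ³ (i.e. the soliton solution generated by the soliton data (κ, [A]) is regular for all real x, y, t). -/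
open Finset Equiv Function

theorem Finset.sum_injective_eq_sum_sum_perm {k n : ℕ} {M : Type*} [AddCommMonoid M]
    (F : (Fin k → Fin n) → M) :
    ∑ p with Injective p, F p =
      ∑ I : {I : Finset (Fin n) // I.card = k}, ∑ σ : Perm (Fin k),
        F (I.1.orderEmbOfFin I.2 ∘ σ) := by
  rw [sum_sigma']
  symm
  refine Finset.sum_bij (fun s _ => s.1.1.orderEmbOfFin s.1.2 ∘ s.2) ?_ ?_ ?_ (fun _ _ => rfl)
  · intro s _
    simpa using (s.1.1.orderEmbOfFin s.1.2).injective.comp s.2.injective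
  · rintro ⟨I, σ⟩ - ⟨J, τ⟩ - h
    have hIJ : I = J := by
      apply Subtype.ext
      simpa [Set.range_comp, EquivLike.range_eq_univ] using congrArg Set.range h
    subst hIJ
    congr
    exact Equiv.ext fun l => by simpa using congrFun h l
  · intro p hp
    have hinj : Injective p := by simpa using hp
    have hcard : (univ.image p).card = k := by
      simp [card_image_of_injective _ hinj]
    let I : {I : Finset (Fin n) // I.card = k} := ⟨univ.image p, hcard⟩
    have hmem : ∀ l, p l ∈ I.1 := fun l => mem_image_of_mem p (mem_univ l)
    let q : Fin k → Fin k := fun l => (I.1.orderIsoOfFin I.2).symm ⟨p l, hmem l⟩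
    have hq : Injective q := fun a b hab => hinj (by simpa [q] using hab)
    refine ⟨⟨I, Equiv.ofBijective q (Finite.injective_iff_bijective.mp hq)⟩, mem_univ _, ?_⟩
    ext l
    simp [q, ← coe_orderIsoOfFin_apply]

namespace Matrix

variable {R : Type*} [CommRing R] {k n : ℕ}

theorem det_mul_eq_sum_prod_mul_det_submatrix (A : Matrix (Fin k) (Fin n) R)
    (B : Matrix (Fin n) (Fin k) R) :
    (A * B).det = ∑ p : Fin k → Fin n, (∏ i, B (p i) i) * (A.submatrix id p).det := by
  simp only [det_apply', mul_apply, prod_univ_sum, mul_sum, Fintype.piFinset_univ,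
    submatrix_apply, id, prod_mul_distrib]
  rw [sum_comm]
  exact sum_congr rfl fun p _ => sum_congr rfl fun σ _ => by ring

theorem det_submatrix_eq_zero_of_not_injective_s17 (A : Matrix (Fin k) (Fin n) R)
    {p : Fin k → Fin n} (hp : ¬ Injective p) : (A.submatrix id p).det = 0 := by
  obtain ⟨i, j, hij, hne⟩ : ∃ i j, p i = p j ∧ i ≠ j := by
    simpa [Injective, and_comm] using hp
  exact det_zero_of_column_eq hne fun l => by simp [hij]

theorem det_mul_eq_sum_det_submatrix (A : Matrix (Fin k) (Fin n) R)
    (B : Matrix (Fin n) (Fin k) R) :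
    (A * B).det = ∑ I : {I : Finset (Fin n) // I.card = k},
      (A.submatrix id (I.1.orderEmbOfFin I.2)).det *
        (B.submatrix (I.1.orderEmbOfFin I.2) id).det := by
  rw [det_mul_eq_sum_prod_mul_det_submatrix,
    ← sum_filter_of_ne (p := Injective) fun p _ h => ?_, sum_injective_eq_sum_sum_perm]
  · refine sum_congr rfl fun I _ => ?_
    rw [det_apply' (B.submatrix _ id), mul_sum]
    refine sum_congr rfl fun σ _ => ?_
    have hA : A.submatrix id (I.1.orderEmbOfFin I.2 ∘ σ) =
        (A.submatrix id (I.1.orderEmbOfFin I.2)).submatrix id σ := rfl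
    rw [hA, det_permute']
    simp only [submatrix_apply, id, Function.comp_apply]
    ring
  · by_contra hp
    exact h (by rw [det_submatrix_eq_zero_of_not_injective_s17 A hp, mul_zero])

theorem det_ne_zero_of_rank_eq_card {K m : Type*} [Field K] [Fintype m] [DecidableEq m]
    {M : Matrix m m K} (h : M.rank = Fintype.card m) : M.det ≠ 0 := by
  have hcols : LinearIndependent K fun i => Mᵀ i :=
    linearIndependent_iff_card_eq_finrank_span.mpr (by rw [← h, rank_eq_finrank_span_cols]; rfl)
  exact ((isUnit_iff_isUnit_det M).mp (linearIndependent_cols_iff_isUnit.mp hcols)).ne_zero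

theorem det_vandermonde_pos {R : Type*} [CommRing R] [LinearOrder R] [IsStrictOrderedRing R]
    {k : ℕ} {v : Fin k → R} (hv : StrictMono v) : 0 < (vandermonde v).det := by
  rw [det_vandermonde]
  exact prod_pos fun i _ => prod_pos fun j hj => sub_pos.mpr (hv (mem_Ioi.mp hj))

end Matrix

open Matrix

theorem maxMinor_eq_det_submatrix {k n : ℕ} (A : Matrix (Fin k) (Fin n) ℝ) {I : Finset (Fin n)}
    (h : I.card = k) : maxMinor A I = (A.submatrix id (I.orderEmbOfFin h)).det := by
  simp only [maxMinor, dif_pos h, coe_orderIsoOfFin_apply]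

/-- By Cauchy–Binet, `∑ I, (maxMinor A I)² = det (A * Aᵀ)`, which is nonzero since `A * Aᵀ` has
rank `k`. -/
theorem exists_maxMinor_ne_zero {k n : ℕ} {A : Matrix (Fin k) (Fin n) ℝ} (hA : A.rank = k) :
    ∃ I : {I : Finset (Fin n) // I.card = k}, maxMinor A I.1 ≠ 0 := by
  have hdet : (A * Aᵀ).det ≠ 0 :=
    det_ne_zero_of_rank_eq_card (by rw [rank_self_mul_transpose, hA, Fintype.card_fin])
  rw [det_mul_eq_sum_det_submatrix] at hdet
  obtain ⟨I, -, hI⟩ := exists_ne_zero_of_sum_ne_zero hdet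
  refine ⟨I, fun h => hI ?_⟩
  rw [← maxMinor_eq_det_submatrix, h, zero_mul]

section ExpSum

variable {ι : Type*} [Fintype ι]

noncomputable def expSum (c a b : ι → ℝ) (x : ℝ) : ℝ :=
  ∑ i, c i * Real.exp (a i * x + b i)

theorem hasDerivAt_expSum (c a b : ι → ℝ) (x : ℝ) :
    HasDerivAt (expSum c a b) (expSum (c * a) a b x) x := by
  unfold expSum
  refine HasDerivAt.fun_sum fun i _ => ?_
  have := (((hasDerivAt_id x).const_mul (a i)).add_const (b i)).exp.const_mul (c i)
  exact this.congr_deriv (by simp only [Pi.mul_apply, id]; ring)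

theorem iteratedDeriv_expSum (c a b : ι → ℝ) (m : ℕ) :
    iteratedDeriv m (expSum c a b) = expSum (c * a ^ m) a b := by
  induction m with
  | zero => rw [iteratedDeriv_zero, pow_zero, mul_one]
  | succ m ih =>
    ext x
    rw [iteratedDeriv_succ, ih, (hasDerivAt_expSum _ a b x).deriv, pow_succ, mul_assoc]

theorem expSum_pos {c : ι → ℝ} (hc : ∀ i, 0 ≤ c i) (hc' : ∃ i, c i ≠ 0) (a b : ι → ℝ) (x : ℝ) :
    0 < expSum c a b x := by
  obtain ⟨i, hi⟩ := hc'
  exact sum_pos' (fun j _ => mul_nonneg (hc j) (Real.exp_pos _).le)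
    ⟨i, mem_univ i, mul_pos ((hc i).lt_of_ne' hi) (Real.exp_pos _)⟩

theorem analyticAt_expSum {E : Type*} [NormedAddCommGroup E] [NormedSpace ℝ E]
    (c a : ι → ℝ) {b : ι → E → ℝ} {p : ℝ × E} (hb : ∀ i, AnalyticAt ℝ (b i) p.2) :
    AnalyticAt ℝ (fun p : ℝ × E => expSum c a (fun i => b i p.2) p.1) p :=
  Finset.analyticAt_fun_sum _ fun i _ => analyticAt_const.mul
    ((analyticAt_const.mul analyticAt_fst).add ((hb i).comp analyticAt_snd)).rexp

theorem det_exp_mul_vandermonde {k : ℕ} (κ β : Fin k → ℝ) (x : ℝ) :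
    (of fun i l : Fin k => Real.exp (κ i * x + β i) * κ i ^ (l : ℕ)).det =
      (vandermonde κ).det * Real.exp ((∑ i, κ i) * x + ∑ i, β i) := by
  change (of fun i l => Real.exp (κ i * x + β i) * vandermonde κ i l).det = _
  rw [det_mul_column, ← Real.exp_sum, sum_add_distrib, sum_mul, mul_comm]

theorem det_iteratedDeriv_expSum {k n : ℕ} (A : Matrix (Fin k) (Fin n) ℝ) (κ β : Fin n → ℝ)
    (x : ℝ) :
    (of fun i l : Fin k => iteratedDeriv l (expSum (A i) κ β) x).det =
      expSum (fun I : {I : Finset (Fin n) // I.card = k} =>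
          maxMinor A I * (vandermonde (κ ∘ I.1.orderEmbOfFin I.2)).det)
        (fun I => ∑ i, κ (I.1.orderEmbOfFin I.2 i))
        (fun I => ∑ i, β (I.1.orderEmbOfFin I.2 i)) x := by
  set W : Matrix (Fin n) (Fin k) ℝ := of fun j l => Real.exp (κ j * x + β j) * κ j ^ (l : ℕ)
  have hW : (of fun i l : Fin k => iteratedDeriv l (expSum (A i) κ β) x) = A * W := by
    ext i l
    simp only [of_apply, iteratedDeriv_expSum, expSum, mul_apply, W, Pi.mul_apply, Pi.pow_apply]
    exact sum_congr rfl fun j _ => by ring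
  rw [hW, det_mul_eq_sum_det_submatrix, expSum]
  refine sum_congr rfl fun I _ => ?_
  rw [← maxMinor_eq_det_submatrix, mul_assoc]
  exact congrArg _ <|
    det_exp_mul_vandermonde (κ ∘ I.1.orderEmbOfFin I.2) (β ∘ I.1.orderEmbOfFin I.2) x

theorem iteratedDeriv_two_log {F F' F'' : ℝ → ℝ} (hF : ∀ x, HasDerivAt F (F' x) x)
    (hF' : ∀ x, HasDerivAt F' (F'' x) x) (hF0 : ∀ x, F x ≠ 0) (x : ℝ) :
    iteratedDeriv 2 (fun x => Real.log (F x)) x = (F'' x * F x - F' x * F' x) / F x ^ 2 := by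
  have hlog : deriv (fun x => Real.log (F x)) = fun x => F' x / F x :=
    funext fun x => ((hF x).log (hF0 x)).deriv
  rw [iteratedDeriv_succ, iteratedDeriv_one, hlog]
  exact ((hF' x).div (hF x) (hF0 x)).deriv

theorem analyticOnNhd_iteratedDeriv_two_log_expSum {E : Type*} [NormedAddCommGroup E]
    [NormedSpace ℝ E] (c a : ι → ℝ) {b : ι → E → ℝ} (hb : ∀ i q, AnalyticAt ℝ (b i) q)
    (hne : ∀ x q, expSum c a (fun i => b i q) x ≠ 0) :
    AnalyticOnNhd ℝ
      (fun p : ℝ × E => iteratedDeriv 2 (fun x => Real.log (expSum c a (fun i => b i p.2) x)) p.1)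
      Set.univ := by
  have hT (c' : ι → ℝ) (p : ℝ × E) :
      AnalyticAt ℝ (fun p : ℝ × E => expSum c' a (fun i => b i p.2) p.1) p :=
    analyticAt_expSum c' a fun i => hb i p.2
  rw [funext fun p : ℝ × E => iteratedDeriv_two_log (hasDerivAt_expSum c a _)
    (hasDerivAt_expSum (c * a) a _) (fun x => hne x p.2) p.1]
  exact fun p _ => (((hT _ p).mul (hT _ p)).sub ((hT _ p).mul (hT _ p))).div ((hT _ p).pow 2)
    (pow_ne_zero 2 (hne _ _))

end ExpSum

theorem multiline_soliton_regular_general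
    (k n : ℕ)
    (κ : Fin n → ℝ) (hκ : StrictMono κ)
    (A : Matrix (Fin k) (Fin n) ℝ) (hrank : A.rank = k)
    (hTNN : ∀ I : Finset (Fin n), I.card = k → 0 ≤ maxMinor A I)
    (f : Fin k → ℝ → ℝ → ℝ → ℝ)
    (hf : ∀ i x y t, f i x y t =
      ∑ j, A i j * Real.exp (κ j * x + κ j ^ 2 * y + κ j ^ 3 * t))
    (τ : ℝ → ℝ → ℝ → ℝ)
    (hτ : ∀ x y t, τ x y t =
      Matrix.det (Matrix.of fun i l : Fin k =>
        iteratedDeriv (l : ℕ) (fun x' => f i x' y t) x)) :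
    (∀ x y t, 0 < τ x y t) ∧
    AnalyticOnNhd ℝ
      (fun p : ℝ × ℝ × ℝ =>
        2 * iteratedDeriv 2 (fun x' => Real.log (τ x' p.2.1 p.2.2)) p.1)
      Set.univ := by
  let c (I : {I : Finset (Fin n) // I.card = k}) : ℝ :=
    maxMinor A I * (vandermonde (κ ∘ I.1.orderEmbOfFin I.2)).det
  let a (I : {I : Finset (Fin n) // I.card = k}) : ℝ := ∑ i, κ (I.1.orderEmbOfFin I.2 i)
  let b (I : {I : Finset (Fin n) // I.card = k}) (q : ℝ × ℝ) : ℝ :=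
    ∑ i, (κ (I.1.orderEmbOfFin I.2 i) ^ 2 * q.1 + κ (I.1.orderEmbOfFin I.2 i) ^ 3 * q.2)
  have hτ_eq (x y t : ℝ) : τ x y t = expSum c a (fun I => b I (y, t)) x := by
    have hfi (i : Fin k) :
        (fun x' => f i x' y t) = expSum (A i) κ (fun j => κ j ^ 2 * y + κ j ^ 3 * t) :=
      funext fun x' => by simp only [hf, expSum, add_assoc]
    simp only [hτ, hfi, det_iteratedDeriv_expSum]
    rfl
  have hvdm (I : {I : Finset (Fin n) // I.card = k}) :
      0 < (vandermonde (κ ∘ I.1.orderEmbOfFin I.2)).det :=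
    det_vandermonde_pos (hκ.comp (I.1.orderEmbOfFin I.2).strictMono)
  obtain ⟨I₀, hI₀⟩ := exists_maxMinor_ne_zero hrank
  have hpos (x : ℝ) (q : ℝ × ℝ) : 0 < expSum c a (fun I => b I q) x :=
    expSum_pos (fun I => mul_nonneg (hTNN I.1 I.2) (hvdm I).le)
      ⟨I₀, mul_ne_zero hI₀ (hvdm I₀).ne'⟩ a _ x
  have hb (I : {I : Finset (Fin n) // I.card = k}) (q : ℝ × ℝ) : AnalyticAt ℝ (b I) q :=
    Finset.analyticAt_fun_sum _ fun i _ =>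
      (analyticAt_const.mul analyticAt_fst).add (analyticAt_const.mul analyticAt_snd)
  refine ⟨fun x y t => hτ_eq x y t ▸ hpos x (y, t), fun p _ => ?_⟩
  simp only [hτ_eq]
  exact analyticAt_const.mul
    (analyticOnNhd_iteratedDeriv_two_log_expSum c a hb (fun x q => (hpos x q).ne') p trivial)

/-- for TNN soliton data `(κ, [A])`, the Wronskian with respect to `x`
of `f_i(x,y,t) = Σ_j A_{ij} e^{κ_j x + κ_j² y + κ_j³ t}` is strictly positive on all
of `ℝ³`; consequently the multiline KP soliton `u = 2 ∂ₓ² log τ` is well-defined and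
real-analytic on `ℝ³`. -/
theorem multiline_soliton_regular
    (k n : ℕ) (hk : 1 ≤ k) (hkn : k < n)
    (κ : Fin n → ℝ) (hκ : StrictMono κ)
    (A : Matrix (Fin k) (Fin n) ℝ) (hrank : A.rank = k)
    (hTNN : ∀ I : Finset (Fin n), I.card = k → 0 ≤ maxMinor A I)
    (f : Fin k → ℝ → ℝ → ℝ → ℝ)
    (hf : ∀ i x y t, f i x y t =
      ∑ j, A i j * Real.exp (κ j * x + κ j ^ 2 * y + κ j ^ 3 * t))
    (τ : ℝ → ℝ → ℝ → ℝ)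
    (hτ : ∀ x y t, τ x y t =
      Matrix.det (Matrix.of fun i l : Fin k =>
        iteratedDeriv (l : ℕ) (fun x' => f i x' y t) x)) :
    (∀ x y t, 0 < τ x y t) ∧
    AnalyticOnNhd ℝ
      (fun p : ℝ × ℝ × ℝ =>
        2 * iteratedDeriv 2 (fun x' => Real.log (τ x' p.2.1 p.2.2)) p.1)
      Set.univ :=
  multiline_soliton_regular_general k n κ hκ A hrank hTNN f hf τ hτ
end
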